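/- arXiv:1202.3560 — 5 statements merged into one kernel-verified Lean document; each statement's English description precedes it below -/
import Mathlib

section
/- Let w ∈ ℍ_g (complex symmetric g×g with positive definite imaginary part) satisfy VwV = −conj(w), and let G = [[P,Q],[R,S]] ∈ Sp(2g,ℤ) commute with diag(V,−V), where V² = Id. Then the modular transform w̃ = (Pw+Q)(Rw+S)⁻¹ also satisfies V w̃ V = −conj(w̃). -/
/-! Conjugation `X ↦ V X V` by the involution `V` and entrywise complex conjugation are both
multiplicative and commute with matrix inversion. The blocks `P, S` commute and `Q, R`
anticommute with `V`, and all four are real, so for `w` with `V w V = -w̄` the numerator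
`P w + Q` is sent by `V · V` to `-(P w̄ + Q)` and the denominator `R w + S` to `R w̄ + S`;
hence `V w̃ V = -(P w̄ + Q)(R w̄ + S)⁻¹ = -conj w̃`. -/

open Matrix

section Involution

variable {M : Type*} [Monoid M] {J : M}

theorem mul_mul_mul_of_mul_self_eq_one (hJ : J * J = 1) (a b : M) :
    J * (a * b) * J = (J * a * J) * (J * b * J) := by
  calc J * (a * b) * J = J * a * (J * J) * b * J := by rw [hJ, mul_one, mul_assoc J a b]
    _ = (J * a * J) * (J * b * J) := by simp only [mul_assoc]

theorem mul_mul_eq_of_mul_self_eq_one (hJ : J * J = 1) {a : M} (ha : a * J = J * a) :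
    J * a * J = a := by
  rw [mul_assoc, ha, ← mul_assoc, hJ, one_mul]

theorem mul_mul_eq_neg_of_mul_self_eq_one {R : Type*} [Ring R] {J : R} (hJ : J * J = 1)
    {a : R} (ha : a * J = -(J * a)) : J * a * J = -a := by
  rw [mul_assoc, ha, mul_neg, ← mul_assoc, hJ, one_mul]

end Involution

namespace Matrix

variable {m n α : Type*}

theorem map_starRingEnd_eq_transpose_conjTranspose [CommSemiring α] [StarRing α]
    (A : Matrix m n α) : A.map (starRingEnd α) = Aᴴᵀ :=
  rfl

theorem map_intCast_map_starRingEnd [CommRing α] [StarRing α] (A : Matrix m n ℤ) :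
    (A.map (Int.cast : ℤ → α)).map (starRingEnd α) = A.map Int.cast := by
  ext i j
  simp

variable [Fintype n] [DecidableEq n]

theorem mul_inv_mul_of_mul_self_eq_one [CommRing α] {J : Matrix n n α} (hJ : J * J = 1)
    (A : Matrix n n α) : J * A⁻¹ * J = (J * A * J)⁻¹ := by
  rw [mul_inv_rev, mul_inv_rev, inv_eq_left_inv hJ, mul_assoc]

theorem inv_map_starRingEnd [CommRing α] [StarRing α] (A : Matrix n n α) :
    A⁻¹.map (starRingEnd α) = (A.map (starRingEnd α))⁻¹ := by
  simp only [map_starRingEnd_eq_transpose_conjTranspose, conjTranspose_nonsing_inv,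
    transpose_nonsing_inv]

theorem commute_fromBlocks_diag_neg_iff [Ring α] {P Q R S J : Matrix n n α} :
    Commute (fromBlocks P Q R S) (fromBlocks J 0 0 (-J)) ↔
      P * J = J * P ∧ -(Q * J) = J * Q ∧ R * J = -(J * R) ∧ S * J = J * S := by
  simp [Commute, SemiconjBy, fromBlocks_multiply, fromBlocks_inj]

theorem mul_mobius_mul_eq_neg_map_starRingEnd [CommRing α] [StarRing α]
    {V w P Q R S : Matrix n n α} (hV : V * V = 1)
    (hw : V * w * V = -w.map (starRingEnd α))
    (hP : P * V = V * P) (hQ : -(Q * V) = V * Q) (hR : R * V = -(V * R)) (hS : S * V = V * S)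
    (hPr : P.map (starRingEnd α) = P) (hQr : Q.map (starRingEnd α) = Q)
    (hRr : R.map (starRingEnd α) = R) (hSr : S.map (starRingEnd α) = S) :
    V * ((P * w + Q) * (R * w + S)⁻¹) * V =
      -((P * w + Q) * (R * w + S)⁻¹).map (starRingEnd α) := by
  set w' := w.map (starRingEnd α)
  have conj_mul_add (A B C : Matrix n n α) :
      V * (A * B + C) * V = (V * A * V) * (V * B * V) + V * C * V := by
    rw [mul_add, add_mul, mul_mul_mul_of_mul_self_eq_one hV]
  have hnum : V * (P * w + Q) * V = -(P * w' + Q) := by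
    rw [conj_mul_add, mul_mul_eq_of_mul_self_eq_one hV hP, hw,
      mul_mul_eq_neg_of_mul_self_eq_one hV (neg_eq_iff_eq_neg.mp hQ)]
    noncomm_ring
  have hden : V * (R * w + S) * V = R * w' + S := by
    rw [conj_mul_add, mul_mul_eq_neg_of_mul_self_eq_one hV hR, hw,
      mul_mul_eq_of_mul_self_eq_one hV hS, neg_mul_neg]
  have hbar : ((P * w + Q) * (R * w + S)⁻¹).map (starRingEnd α) =
      (P * w' + Q) * (R * w' + S)⁻¹ := by
    simp only [Matrix.map_mul, inv_map_starRingEnd, Matrix.map_add _ (map_add _), hPr, hQr, hRr,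
      hSr, w']
  rw [hbar, mul_mul_mul_of_mul_self_eq_one hV, mul_inv_mul_of_mul_self_eq_one hV, hnum, hden,
    neg_mul]

end Matrix

theorem stmt1_general (g : ℕ)
    (V : Matrix (Fin g) (Fin g) ℝ) (hV : V * V = 1)
    (w : Matrix (Fin g) (Fin g) ℂ)
    (hwV : (V.map (Complex.ofReal)) * w * (V.map (Complex.ofReal)) =
      -(w.map (starRingEnd ℂ)))
    (P Q R S : Matrix (Fin g) (Fin g) ℤ)
    (hcomm :
      Matrix.fromBlocks (P.map (Int.cast : ℤ → ℂ)) (Q.map (Int.cast : ℤ → ℂ))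
          (R.map (Int.cast : ℤ → ℂ)) (S.map (Int.cast : ℤ → ℂ)) *
        Matrix.fromBlocks (V.map Complex.ofReal) 0 0 (-(V.map Complex.ofReal)) =
      Matrix.fromBlocks (V.map Complex.ofReal) 0 0 (-(V.map Complex.ofReal)) *
        Matrix.fromBlocks (P.map (Int.cast : ℤ → ℂ)) (Q.map (Int.cast : ℤ → ℂ))
          (R.map (Int.cast : ℤ → ℂ)) (S.map (Int.cast : ℤ → ℂ))) :
    (V.map Complex.ofReal) *
        ((P.map (Int.cast : ℤ → ℂ) * w + Q.map (Int.cast : ℤ → ℂ)) *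
          (R.map (Int.cast : ℤ → ℂ) * w + S.map (Int.cast : ℤ → ℂ))⁻¹) *
        (V.map Complex.ofReal) =
      -(((P.map (Int.cast : ℤ → ℂ) * w + Q.map (Int.cast : ℤ → ℂ)) *
          (R.map (Int.cast : ℤ → ℂ) * w + S.map (Int.cast : ℤ → ℂ))⁻¹).map
        (starRingEnd ℂ)) := by
  have hVc : V.map Complex.ofReal * V.map Complex.ofReal = 1 := by
    have := congrArg Complex.ofRealHom.mapMatrix hV
    rwa [map_mul, map_one] at this
  obtain ⟨hP, hQ, hR, hS⟩ := commute_fromBlocks_diag_neg_iff.mp hcomm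
  exact mul_mobius_mul_eq_neg_map_starRingEnd hVc hwV hP hQ hR hS
    (map_intCast_map_starRingEnd P) (map_intCast_map_starRingEnd Q)
    (map_intCast_map_starRingEnd R) (map_intCast_map_starRingEnd S)

theorem stmt1 (g : ℕ) (hg : 0 < g)
    (V : Matrix (Fin g) (Fin g) ℝ) (hV : V * V = 1)
    (w : Matrix (Fin g) (Fin g) ℂ) (hw : wᵀ = w)
    (hwpd : (w.map Complex.im).PosDef)
    (hwV : (V.map (Complex.ofReal)) * w * (V.map (Complex.ofReal)) =
      -(w.map (starRingEnd ℂ)))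
    (P Q R S : Matrix (Fin g) (Fin g) ℤ)
    (hsymp : (Matrix.fromBlocks P Q R S)ᵀ *
        (Matrix.fromBlocks 0 1 (-1) 0 : Matrix (Fin g ⊕ Fin g) (Fin g ⊕ Fin g) ℤ) *
        Matrix.fromBlocks P Q R S = Matrix.fromBlocks 0 1 (-1) 0)
    (hcomm :
      Matrix.fromBlocks (P.map (Int.cast : ℤ → ℂ)) (Q.map (Int.cast : ℤ → ℂ))
          (R.map (Int.cast : ℤ → ℂ)) (S.map (Int.cast : ℤ → ℂ)) *
        Matrix.fromBlocks (V.map Complex.ofReal) 0 0 (-(V.map Complex.ofReal)) =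
      Matrix.fromBlocks (V.map Complex.ofReal) 0 0 (-(V.map Complex.ofReal)) *
        Matrix.fromBlocks (P.map (Int.cast : ℤ → ℂ)) (Q.map (Int.cast : ℤ → ℂ))
          (R.map (Int.cast : ℤ → ℂ)) (S.map (Int.cast : ℤ → ℂ))) :
    (V.map Complex.ofReal) *
        ((P.map (Int.cast : ℤ → ℂ) * w + Q.map (Int.cast : ℤ → ℂ)) *
          (R.map (Int.cast : ℤ → ℂ) * w + S.map (Int.cast : ℤ → ℂ))⁻¹) *
        (V.map Complex.ofReal) =
      -(((P.map (Int.cast : ℤ → ℂ) * w + Q.map (Int.cast : ℤ → ℂ)) *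
          (R.map (Int.cast : ℤ → ℂ) * w + S.map (Int.cast : ℤ → ℂ))⁻¹).map
        (starRingEnd ℂ)) :=
  stmt1_general g V hV w hwV P Q R S hcomm
end

section
/- Let Σ ∈ 𝒱 be symmetric with G(Σ) = (σ,τ). Then Σ is positive definite if and only if both σ and τ are positive definite. -/
open Matrix

/-- The space 𝒱 of 4g₀×4g₀ matrices of the block form
[[α,β,γ,δ],[β,α,−δ,−γ],[π,ρ,ξ,η],[−ρ,−π,η,ξ]]. -/
def Vspace (g₀ : ℕ) (R : Type*) [Ring R] :
    Set (Matrix ((Fin g₀ ⊕ Fin g₀) ⊕ (Fin g₀ ⊕ Fin g₀))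
      ((Fin g₀ ⊕ Fin g₀) ⊕ (Fin g₀ ⊕ Fin g₀)) R) :=
  {S | ∃ a b c d p r x e : Matrix (Fin g₀) (Fin g₀) R,
    S = Matrix.fromBlocks (Matrix.fromBlocks a b b a) (Matrix.fromBlocks c d (-d) (-c))
      (Matrix.fromBlocks p r (-r) (-p)) (Matrix.fromBlocks x e e x)}

/-- First component of the map G: [[α+β, γ−δ],[π+ρ, ξ−η]]. -/
def gg1 {g₀ : ℕ} {R : Type*} [Ring R]
    (S : Matrix ((Fin g₀ ⊕ Fin g₀) ⊕ (Fin g₀ ⊕ Fin g₀))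
      ((Fin g₀ ⊕ Fin g₀) ⊕ (Fin g₀ ⊕ Fin g₀)) R) :
    Matrix (Fin g₀ ⊕ Fin g₀) (Fin g₀ ⊕ Fin g₀) R :=
  Matrix.fromBlocks
    (S.submatrix (Sum.inl ∘ Sum.inl) (Sum.inl ∘ Sum.inl) +
      S.submatrix (Sum.inl ∘ Sum.inl) (Sum.inl ∘ Sum.inr))
    (S.submatrix (Sum.inl ∘ Sum.inl) (Sum.inr ∘ Sum.inl) -
      S.submatrix (Sum.inl ∘ Sum.inl) (Sum.inr ∘ Sum.inr))
    (S.submatrix (Sum.inr ∘ Sum.inl) (Sum.inl ∘ Sum.inl) +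
      S.submatrix (Sum.inr ∘ Sum.inl) (Sum.inl ∘ Sum.inr))
    (S.submatrix (Sum.inr ∘ Sum.inl) (Sum.inr ∘ Sum.inl) -
      S.submatrix (Sum.inr ∘ Sum.inl) (Sum.inr ∘ Sum.inr))

/-- Second component of the map G: [[α−β, γ+δ],[π−ρ, ξ+η]]. -/
def gg2 {g₀ : ℕ} {R : Type*} [Ring R]
    (S : Matrix ((Fin g₀ ⊕ Fin g₀) ⊕ (Fin g₀ ⊕ Fin g₀))
      ((Fin g₀ ⊕ Fin g₀) ⊕ (Fin g₀ ⊕ Fin g₀)) R) :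
    Matrix (Fin g₀ ⊕ Fin g₀) (Fin g₀ ⊕ Fin g₀) R :=
  Matrix.fromBlocks
    (S.submatrix (Sum.inl ∘ Sum.inl) (Sum.inl ∘ Sum.inl) -
      S.submatrix (Sum.inl ∘ Sum.inl) (Sum.inl ∘ Sum.inr))
    (S.submatrix (Sum.inl ∘ Sum.inl) (Sum.inr ∘ Sum.inl) +
      S.submatrix (Sum.inl ∘ Sum.inl) (Sum.inr ∘ Sum.inr))
    (S.submatrix (Sum.inr ∘ Sum.inl) (Sum.inl ∘ Sum.inl) -
      S.submatrix (Sum.inr ∘ Sum.inl) (Sum.inl ∘ Sum.inr))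
    (S.submatrix (Sum.inr ∘ Sum.inl) (Sum.inr ∘ Sum.inl) +
      S.submatrix (Sum.inr ∘ Sum.inl) (Sum.inr ∘ Sum.inr))

/-- The standard symplectic matrix J = [[0,Id],[−Id,0]]. -/
def Jstd (n : Type*) (R : Type*) [Ring R] [DecidableEq n] [Fintype n] :
    Matrix (n ⊕ n) (n ⊕ n) R :=
  Matrix.fromBlocks 0 1 (-1) 0

/-!
With `Q = [[1,1,0,0],[0,0,1,-1],[1,-1,0,0],[0,0,1,1]]` one has `Q Qᵀ = 2` and, for `S ∈ 𝒱`,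
`Q S Qᵀ = 2 • diag(σ, τ)` where `G(S) = (σ, τ)`. Congruence by the invertible `Q` and scaling by
`2 > 0` preserve positive definiteness, and a block-diagonal matrix is positive definite exactly
when both diagonal blocks are.
-/

open scoped ComplexOrder

namespace Matrix

section PosDef

variable {𝕜 : Type*} [RCLike 𝕜] {m n : Type*}

theorem posDef_smul_iff {M : Matrix n n 𝕜} {c : ℝ} (hc : 0 < c) :
    (c • M).PosDef ↔ M.PosDef :=
  ⟨fun h => by simpa [smul_smul, hc.ne'] using h.smul (inv_pos.mpr hc), fun h => h.smul hc⟩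

variable [Fintype m] [Fintype n] [DecidableEq m] [DecidableEq n]

theorem posDef_fromBlocks_zero_iff {A : Matrix m m 𝕜} {D : Matrix n n 𝕜} :
    (fromBlocks A 0 0 D).PosDef ↔ A.PosDef ∧ D.PosDef := by
  refine ⟨fun h => ⟨h.submatrix Sum.inl_injective, h.submatrix Sum.inr_injective⟩,
    fun ⟨hA, hD⟩ => ?_⟩
  have : Invertible A := hA.isUnit.invertible
  have hpsd : (fromBlocks A 0 0 D).PosSemidef := by
    simpa using (PosDef.fromBlocks₁₁ 0 D hA).mpr (by simpa using hD.posSemidef)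
  rw [hpsd.posDef_iff_isUnit, isUnit_iff_isUnit_det, det_fromBlocks_zero₂₁]
  exact (isUnit_iff_isUnit_det A |>.mp hA.isUnit).mul (isUnit_iff_isUnit_det D |>.mp hD.isUnit)

end PosDef

def vspaceDiagonalizer (n R : Type*) [DecidableEq n] [Ring R] :
    Matrix ((n ⊕ n) ⊕ (n ⊕ n)) ((n ⊕ n) ⊕ (n ⊕ n)) R :=
  fromBlocks (fromBlocks 1 1 0 0) (fromBlocks 0 0 1 (-1)) (fromBlocks 1 (-1) 0 0) (fromBlocks 0 0 1 1)

section Diagonalizer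

variable {n R : Type*} [DecidableEq n]

theorem conjTranspose_vspaceDiagonalizer [Ring R] [StarRing R] :
    (vspaceDiagonalizer n R)ᴴ = (vspaceDiagonalizer n R)ᵀ := by
  simp [vspaceDiagonalizer, fromBlocks_conjTranspose, fromBlocks_transpose]

variable [Fintype n]

theorem vspaceDiagonalizer_mul_transpose [Ring R] :
    vspaceDiagonalizer n R * (vspaceDiagonalizer n R)ᵀ = (2 : R) • 1 := by
  simp only [vspaceDiagonalizer, fromBlocks_transpose, fromBlocks_multiply, transpose_one,
    transpose_zero, transpose_neg, Matrix.mul_one, Matrix.mul_zero, Matrix.mul_neg, add_zero,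
    neg_neg, neg_zero]
  simp only [← fromBlocks_one, fromBlocks_add, two_smul, add_zero, zero_add, add_neg_cancel,
    fromBlocks_zero]

theorem isUnit_vspaceDiagonalizer {K : Type*} [Field K] [NeZero (2 : K)] :
    IsUnit (vspaceDiagonalizer n K) := by
  rw [isUnit_iff_isUnit_det]
  refine isUnit_det_of_right_inverse (B := (2 : K)⁻¹ • (vspaceDiagonalizer n K)ᵀ) ?_
  rw [Matrix.mul_smul, vspaceDiagonalizer_mul_transpose, smul_smul, inv_mul_cancel₀ two_ne_zero,
    one_smul]

end Diagonalizer

end Matrix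

section Vspace

variable {g₀ : ℕ} {R : Type*} [Ring R]

theorem gg1_fromBlocks (a b c d p r x e : Matrix (Fin g₀) (Fin g₀) R)
    (b' a' d' c' r' p' e' x' : Matrix (Fin g₀) (Fin g₀) R) :
    gg1 (fromBlocks (fromBlocks a b b' a') (fromBlocks c d d' c') (fromBlocks p r r' p')
      (fromBlocks x e e' x')) = fromBlocks (a + b) (c - d) (p + r) (x - e) := by
  ext (i | i) (j | j) <;> rfl

theorem gg2_fromBlocks (a b c d p r x e : Matrix (Fin g₀) (Fin g₀) R)
    (b' a' d' c' r' p' e' x' : Matrix (Fin g₀) (Fin g₀) R) :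
    gg2 (fromBlocks (fromBlocks a b b' a') (fromBlocks c d d' c') (fromBlocks p r r' p')
      (fromBlocks x e e' x')) = fromBlocks (a - b) (c + d) (p - r) (x + e) := by
  ext (i | i) (j | j) <;> rfl

theorem vspaceDiagonalizer_mul_mul_transpose
    {S : Matrix ((Fin g₀ ⊕ Fin g₀) ⊕ (Fin g₀ ⊕ Fin g₀)) ((Fin g₀ ⊕ Fin g₀) ⊕ (Fin g₀ ⊕ Fin g₀)) R}
    (hS : S ∈ Vspace g₀ R) :
    vspaceDiagonalizer (Fin g₀) R * S * (vspaceDiagonalizer (Fin g₀) R)ᵀ =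
      (2 : R) • fromBlocks (gg1 S) 0 0 (gg2 S) := by
  obtain ⟨a, b, c, d, p, r, x, e, rfl⟩ := hS
  rw [gg1_fromBlocks, gg2_fromBlocks, ← fromBlocks_zero (n := Fin g₀)]
  simp only [vspaceDiagonalizer, fromBlocks_transpose, fromBlocks_multiply, transpose_one,
    transpose_zero, transpose_neg, Matrix.mul_one, Matrix.mul_zero, Matrix.zero_mul,
    Matrix.one_mul, Matrix.mul_neg, Matrix.neg_mul, add_zero, zero_add, neg_neg, neg_zero,
    fromBlocks_inj, fromBlocks_add, two_smul]
  and_intros <;> abel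

end Vspace

theorem stmt10_general (g₀ : ℕ)
    (S : Matrix ((Fin g₀ ⊕ Fin g₀) ⊕ (Fin g₀ ⊕ Fin g₀))
      ((Fin g₀ ⊕ Fin g₀) ⊕ (Fin g₀ ⊕ Fin g₀)) ℝ)
    (hS : S ∈ Vspace g₀ ℝ) :
    S.PosDef ↔ (gg1 S).PosDef ∧ (gg2 S).PosDef := by
  set Q := vspaceDiagonalizer (Fin g₀) ℝ
  calc S.PosDef ↔ (Q * S * star Q).PosDef :=
        isUnit_vspaceDiagonalizer.posDef_star_right_conjugate_iff.symm
    _ ↔ ((2 : ℝ) • fromBlocks (gg1 S) 0 0 (gg2 S)).PosDef := by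
        rw [star_eq_conjTranspose, conjTranspose_vspaceDiagonalizer,
          vspaceDiagonalizer_mul_mul_transpose hS]
    _ ↔ (gg1 S).PosDef ∧ (gg2 S).PosDef := by
        rw [posDef_smul_iff two_pos, posDef_fromBlocks_zero_iff]

theorem stmt10 (g₀ : ℕ)
    (S : Matrix ((Fin g₀ ⊕ Fin g₀) ⊕ (Fin g₀ ⊕ Fin g₀))
      ((Fin g₀ ⊕ Fin g₀) ⊕ (Fin g₀ ⊕ Fin g₀)) ℝ)
    (hS : S ∈ Vspace g₀ ℝ) (hsymm : Sᵀ = S) :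
    S.PosDef ↔ (gg1 S).PosDef ∧ (gg2 S).PosDef :=
  stmt10_general g₀ S hS
end

section
/- The map P defined on the group of real symplectic 4g₀×4g₀ matrices of the form [[α,β,γ,δ],[β,α,−δ,−γ],[π,ρ,ξ,η],[−ρ,−π,η,ξ]] by P(Σ) = [[α+β, γ−δ],[π+ρ, ξ−η]] is a bijection onto GL(2g₀,ℝ), with inverse σ ↦ G⁻¹(σ, −J(σ⁻¹)ᵀJ). -/
/-!
Let `Q = vBasis`, whose columns span `W₁ = {(u, u, v, -v)}` and `W₂ = {(u, -u, v, v)}`.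
Every `S ∈ 𝒱` preserves both subspaces, acting on them by `gg1 S` and `gg2 S`, i.e.
`S * Q = Q * diag (gg1 S, gg2 S)`; since `Qᵀ * Q = 2`, this makes `G` a bijection
`𝒱 ≅ Mat(2g₀)²`. Both `Wᵢ` are isotropic for `J`, which pairs `W₁` with `W₂` through
`2 J`, so `S` is symplectic iff `(gg1 S)ᵀ J (gg2 S) = J`. For a pair `(σ, τ)` this relation says
exactly that `σ` is invertible and `τ = -J (σ⁻¹)ᵀ J`.
-/

open Matrix

section Symplectic

variable {n R : Type*} [DecidableEq n] [Fintype n] [CommRing R]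

theorem Jstd_transpose : (Jstd n R)ᵀ = -Jstd n R := by
  simp [Jstd, fromBlocks_transpose, fromBlocks_neg]

theorem Jstd_mul_Jstd : Jstd n R * Jstd n R = -1 := by
  simp [Jstd, fromBlocks_multiply, ← fromBlocks_one, fromBlocks_neg]

theorem transpose_mul_Jstd_mul_symm {σ τ : Matrix (n ⊕ n) (n ⊕ n) R}
    (h : σᵀ * Jstd n R * τ = Jstd n R) : τᵀ * Jstd n R * σ = Jstd n R := by
  simpa [Jstd_transpose, Matrix.mul_assoc] using congrArg Matrix.transpose h

theorem isUnit_of_transpose_mul_Jstd_mul_eq_Jstd {σ τ : Matrix (n ⊕ n) (n ⊕ n) R}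
    (h : σᵀ * Jstd n R * τ = Jstd n R) : IsUnit σ := by
  have hinv : σᵀ * (Jstd n R * τ * -Jstd n R) = 1 := by
    rw [← Matrix.mul_assoc, ← Matrix.mul_assoc, h, Matrix.mul_neg, Jstd_mul_Jstd, neg_neg]
  rw [isUnit_iff_isUnit_det, ← det_transpose]
  exact isUnit_det_of_right_inverse hinv

theorem transpose_mul_Jstd_mul_eq_Jstd_iff {σ τ : Matrix (n ⊕ n) (n ⊕ n) R}
    (hσ : IsUnit σ) :
    σᵀ * Jstd n R * τ = Jstd n R ↔ τ = -(Jstd n R * σ⁻¹ᵀ * Jstd n R) := by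
  have hσT : IsUnit σᵀ.det := by rwa [det_transpose, ← isUnit_iff_isUnit_det]
  rw [transpose_nonsing_inv]
  constructor
  · intro h
    calc τ = -(Jstd n R * (Jstd n R * τ)) := by
          rw [← Matrix.mul_assoc, Jstd_mul_Jstd, Matrix.neg_mul, Matrix.one_mul, neg_neg]
      _ = -(Jstd n R * σᵀ⁻¹ * Jstd n R) := by
          rw [← nonsing_inv_mul_cancel_left σᵀ (Jstd n R * τ) hσT, ← Matrix.mul_assoc σᵀ, h,
            Matrix.mul_assoc]
  · rintro rfl
    simp only [Matrix.mul_neg, Matrix.mul_assoc]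
    rw [← Matrix.mul_assoc (Jstd n R) (Jstd n R), Jstd_mul_Jstd, Matrix.neg_mul,
      Matrix.one_mul, Matrix.mul_neg, neg_neg, mul_nonsing_inv_cancel_left _ _ hσT]

end Symplectic

theorem fromBlocks_diag_transpose_mul_antidiag_mul {l m R : Type*} [Fintype l] [Fintype m]
    [Semiring R] (A : Matrix l l R) (B : Matrix m m R) (M : Matrix l m R) (N : Matrix m l R) :
    (fromBlocks A 0 0 B)ᵀ * fromBlocks 0 M N 0 * fromBlocks A 0 0 B =
      fromBlocks 0 (Aᵀ * M * B) (Bᵀ * N * A) 0 := by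
  simp [fromBlocks_transpose, fromBlocks_multiply]

def vBlocks {n R : Type*} [Ring R] (a b c d p r x e : Matrix n n R) :
    Matrix ((n ⊕ n) ⊕ (n ⊕ n)) ((n ⊕ n) ⊕ (n ⊕ n)) R :=
  fromBlocks (fromBlocks a b b a) (fromBlocks c d (-d) (-c))
    (fromBlocks p r (-r) (-p)) (fromBlocks x e e x)

theorem smul_vBlocks {n R : Type*} [Ring R] (k : R) (a b c d p r x e : Matrix n n R) :
    k • vBlocks a b c d p r x e =
      vBlocks (k • a) (k • b) (k • c) (k • d) (k • p) (k • r) (k • x) (k • e) := by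
  simp [vBlocks, fromBlocks_smul]

def vBasis (n R : Type*) [Ring R] [DecidableEq n] [Fintype n] :
    Matrix ((n ⊕ n) ⊕ (n ⊕ n)) ((n ⊕ n) ⊕ (n ⊕ n)) R :=
  fromBlocks (fromBlocks 1 0 1 0) (fromBlocks 1 0 (-1) 0)
    (fromBlocks 0 1 0 (-1)) (fromBlocks 0 1 0 1)

section vBasis

variable {n R : Type*} [DecidableEq n] [Fintype n]

section Ring

variable [Ring R]

theorem vBlocks_mul_vBasis (a b c d p r x e : Matrix n n R) :
    vBlocks a b c d p r x e * vBasis n R =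
      vBasis n R * fromBlocks (fromBlocks (a + b) (c - d) (p + r) (x - e)) 0 0
        (fromBlocks (a - b) (c + d) (p - r) (x + e)) := by
  simp only [vBlocks, vBasis, fromBlocks_multiply, Matrix.mul_one, Matrix.one_mul,
    Matrix.mul_zero, Matrix.zero_mul, Matrix.mul_neg, Matrix.neg_mul, add_zero, zero_add,
    fromBlocks_add, fromBlocks_inj]
  refine ⟨⟨?_, ?_, ?_, ?_⟩, ⟨?_, ?_, ?_, ?_⟩, ⟨?_, ?_, ?_, ?_⟩, ⟨?_, ?_, ?_, ?_⟩⟩ <;>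
    first | trivial | abel

theorem vBasis_mul_fromBlocks_mul_transpose (a b c d a' b' c' d' : Matrix n n R) :
    vBasis n R * fromBlocks (fromBlocks a b c d) 0 0 (fromBlocks a' b' c' d') * (vBasis n R)ᵀ =
      vBlocks (a + a') (a - a') (b + b') (b' - b) (c + c') (c - c') (d + d') (d' - d) := by
  simp only [vBlocks, vBasis, fromBlocks_transpose, fromBlocks_multiply, Matrix.mul_one,
    Matrix.one_mul, Matrix.mul_zero, Matrix.zero_mul, Matrix.mul_neg, Matrix.neg_mul, add_zero,
    zero_add, transpose_zero, transpose_one, transpose_neg, fromBlocks_add, fromBlocks_inj]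
  refine ⟨⟨?_, ?_, ?_, ?_⟩, ⟨?_, ?_, ?_, ?_⟩, ⟨?_, ?_, ?_, ?_⟩, ⟨?_, ?_, ?_, ?_⟩⟩ <;>
    first | trivial | abel

theorem vBasis_transpose_mul_self : (vBasis n R)ᵀ * vBasis n R = (2 : R) • 1 := by
  rw [two_smul]
  simp [vBasis, fromBlocks_transpose, fromBlocks_multiply, ← fromBlocks_one, fromBlocks_add]

theorem vBasis_transpose_mul_Jstd_mul_vBasis :
    (vBasis n R)ᵀ * Jstd (n ⊕ n) R * vBasis n R =
      (2 : R) • fromBlocks 0 (Jstd n R) (Jstd n R) 0 := by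
  rw [two_smul]
  simp [vBasis, Jstd, fromBlocks_transpose, fromBlocks_multiply, fromBlocks_add, fromBlocks_neg]

end Ring

theorem isUnit_vBasis [Field R] [NeZero (2 : R)] : IsUnit (vBasis n R) := by
  have h : ((2 : R)⁻¹ • (vBasis n R)ᵀ) * vBasis n R = 1 := by
    rw [Matrix.smul_mul, vBasis_transpose_mul_self, smul_smul, inv_mul_cancel₀ two_ne_zero,
      one_smul]
  exact (isUnit_iff_isUnit_det _).2 (isUnit_det_of_left_inverse h)

end vBasis

namespace Vspace

variable {g₀ : ℕ} {R : Type*}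
  {S S' : Matrix ((Fin g₀ ⊕ Fin g₀) ⊕ (Fin g₀ ⊕ Fin g₀))
    ((Fin g₀ ⊕ Fin g₀) ⊕ (Fin g₀ ⊕ Fin g₀)) R}

theorem mem_iff [Ring R] :
    S ∈ Vspace g₀ R ↔ ∃ a b c d p r x e : Matrix (Fin g₀) (Fin g₀) R,
      S = vBlocks a b c d p r x e :=
  Iff.rfl

theorem gg1_vBlocks [Ring R] (a b c d p r x e : Matrix (Fin g₀) (Fin g₀) R) :
    gg1 (vBlocks a b c d p r x e) = fromBlocks (a + b) (c - d) (p + r) (x - e) := by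
  ext (i | i) (j | j) <;> simp [gg1, vBlocks]

theorem gg2_vBlocks [Ring R] (a b c d p r x e : Matrix (Fin g₀) (Fin g₀) R) :
    gg2 (vBlocks a b c d p r x e) = fromBlocks (a - b) (c + d) (p - r) (x + e) := by
  ext (i | i) (j | j) <;> simp [gg2, vBlocks]

theorem mul_vBasis [Ring R] (hS : S ∈ Vspace g₀ R) :
    S * vBasis (Fin g₀) R = vBasis (Fin g₀) R * fromBlocks (gg1 S) 0 0 (gg2 S) := by
  obtain ⟨a, b, c, d, p, r, x, e, rfl⟩ := mem_iff.1 hS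
  rw [gg1_vBlocks, gg2_vBlocks, vBlocks_mul_vBasis]

variable [Field R] [NeZero (2 : R)]

theorem eq_of_gg1_eq_of_gg2_eq (hS : S ∈ Vspace g₀ R) (hS' : S' ∈ Vspace g₀ R)
    (h₁ : gg1 S = gg1 S') (h₂ : gg2 S = gg2 S') : S = S' :=
  isUnit_vBasis.mul_right_cancel <| by
    rw [mul_vBasis hS, mul_vBasis hS', h₁, h₂]

theorem exists_gg1_eq_gg2_eq (σ τ : Matrix (Fin g₀ ⊕ Fin g₀) (Fin g₀ ⊕ Fin g₀) R) :
    ∃ S ∈ Vspace g₀ R, gg1 S = σ ∧ gg2 S = τ := by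
  have hS : (2⁻¹ : R) • (vBasis _ R * fromBlocks σ 0 0 τ * (vBasis _ R)ᵀ) ∈ Vspace g₀ R := by
    rw [mem_iff, ← fromBlocks_toBlocks σ, ← fromBlocks_toBlocks τ,
      vBasis_mul_fromBlocks_mul_transpose, smul_vBlocks]
    exact ⟨_, _, _, _, _, _, _, _, rfl⟩
  have hSQ : (2⁻¹ : R) • (vBasis _ R * fromBlocks σ 0 0 τ * (vBasis _ R)ᵀ) * vBasis _ R =
      vBasis _ R * fromBlocks σ 0 0 τ := by
    rw [Matrix.smul_mul, Matrix.mul_assoc, vBasis_transpose_mul_self, Matrix.mul_smul,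
      Matrix.mul_one, smul_smul, inv_mul_cancel₀ two_ne_zero, one_smul]
  obtain ⟨h₁, -, -, h₂⟩ :=
    fromBlocks_inj.1 (isUnit_vBasis.mul_left_cancel ((mul_vBasis hS).symm.trans hSQ))
  exact ⟨_, hS, h₁, h₂⟩

theorem transpose_mul_Jstd_mul_self_iff (hS : S ∈ Vspace g₀ R) :
    Sᵀ * Jstd (Fin g₀ ⊕ Fin g₀) R * S = Jstd (Fin g₀ ⊕ Fin g₀) R ↔
      (gg1 S)ᵀ * Jstd (Fin g₀) R * gg2 S = Jstd (Fin g₀) R := by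
  have hQ : IsUnit (vBasis (Fin g₀) R) := isUnit_vBasis
  have conj_inj : Function.Injective fun A => (vBasis (Fin g₀) R)ᵀ * A * vBasis _ R :=
    fun A B h => ((isUnit_transpose _).2 hQ).mul_left_cancel (hQ.mul_right_cancel h)
  have key : (vBasis _ R)ᵀ * (Sᵀ * Jstd _ R * S) * vBasis _ R = (2 : R) • fromBlocks 0
      ((gg1 S)ᵀ * Jstd _ R * gg2 S) ((gg2 S)ᵀ * Jstd _ R * gg1 S) 0 := by
    calc (vBasis _ R)ᵀ * (Sᵀ * Jstd _ R * S) * vBasis _ R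
        = (S * vBasis _ R)ᵀ * Jstd _ R * (S * vBasis _ R) := by
          simp only [transpose_mul, Matrix.mul_assoc]
      _ = (fromBlocks (gg1 S) 0 0 (gg2 S))ᵀ * ((vBasis _ R)ᵀ * Jstd _ R * vBasis _ R) *
            fromBlocks (gg1 S) 0 0 (gg2 S) := by
          rw [mul_vBasis hS, transpose_mul]
          simp only [Matrix.mul_assoc]
      _ = _ := by
          rw [vBasis_transpose_mul_Jstd_mul_vBasis, Matrix.mul_smul, Matrix.smul_mul,
            fromBlocks_diag_transpose_mul_antidiag_mul]
  rw [← conj_inj.eq_iff, key, vBasis_transpose_mul_Jstd_mul_vBasis,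
    (smul_right_injective _ two_ne_zero).eq_iff, fromBlocks_inj]
  exact ⟨fun h => h.2.1, fun h => ⟨rfl, h, transpose_mul_Jstd_mul_symm h, rfl⟩⟩

theorem transpose_mul_Jstd_mul_self_iff_gg2_eq
    (hS : S ∈ Vspace g₀ R) {σ : Matrix (Fin g₀ ⊕ Fin g₀) (Fin g₀ ⊕ Fin g₀) R} (hσ : IsUnit σ)
    (h₁ : gg1 S = σ) :
    Sᵀ * Jstd (Fin g₀ ⊕ Fin g₀) R * S = Jstd (Fin g₀ ⊕ Fin g₀) R ↔
      gg2 S = -(Jstd (Fin g₀) R * σ⁻¹ᵀ * Jstd (Fin g₀) R) := by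
  rw [transpose_mul_Jstd_mul_self_iff hS, h₁, transpose_mul_Jstd_mul_eq_Jstd_iff hσ]

end Vspace

theorem stmt12 (g₀ : ℕ) :
    (∀ S ∈ {S ∈ Vspace g₀ ℝ |
        Sᵀ * Jstd (Fin g₀ ⊕ Fin g₀) ℝ * S = Jstd (Fin g₀ ⊕ Fin g₀) ℝ},
      IsUnit (gg1 S)) ∧
    (∀ σ : Matrix (Fin g₀ ⊕ Fin g₀) (Fin g₀ ⊕ Fin g₀) ℝ, IsUnit σ →
      (∃! S, S ∈ {S ∈ Vspace g₀ ℝ |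
          Sᵀ * Jstd (Fin g₀ ⊕ Fin g₀) ℝ * S = Jstd (Fin g₀ ⊕ Fin g₀) ℝ} ∧
        gg1 S = σ) ∧
      ∀ S ∈ {S ∈ Vspace g₀ ℝ |
          Sᵀ * Jstd (Fin g₀ ⊕ Fin g₀) ℝ * S = Jstd (Fin g₀ ⊕ Fin g₀) ℝ},
        gg1 S = σ → gg2 S = -(Jstd (Fin g₀) ℝ * (σ⁻¹)ᵀ * Jstd (Fin g₀) ℝ)) := by
  refine ⟨fun S hS => isUnit_of_transpose_mul_Jstd_mul_eq_Jstd
      ((Vspace.transpose_mul_Jstd_mul_self_iff hS.1).1 hS.2),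
    fun σ hσ => ⟨?_, fun S hS h₁ =>
      (Vspace.transpose_mul_Jstd_mul_self_iff_gg2_eq hS.1 hσ h₁).1 hS.2⟩⟩
  obtain ⟨S, hS, h₁, h₂⟩ :=
    Vspace.exists_gg1_eq_gg2_eq σ (-(Jstd (Fin g₀) ℝ * (σ⁻¹)ᵀ * Jstd (Fin g₀) ℝ))
  refine ⟨S, ⟨⟨hS, (Vspace.transpose_mul_Jstd_mul_self_iff_gg2_eq hS hσ h₁).2 h₂⟩, h₁⟩, ?_⟩
  rintro S' ⟨⟨hS', hsymp'⟩, h₁'⟩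
  have h₂' := (Vspace.transpose_mul_Jstd_mul_self_iff_gg2_eq hS' hσ h₁').1 hsymp'
  exact Vspace.eq_of_gg1_eq_of_gg2_eq hS' hS (h₁'.trans h₁.symm) (h₂'.trans h₂.symm)
end

section
/- For w = [[γ+iδ, iβ],[iβ, −γ+iδ]] with real β,γ,δ and δ > |β| (so w ∈ ℍ₂ and VwV = −conj(w) with V = [[0,1],[1,0]]), one has (P∘Σ)(w) = (1/(δ+β))·[[1, −γ],[−γ, γ²+δ²−β²]]. In particular det((P∘Σ)(w)) = (δ−β)/(δ+β). -/
/-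
Both λ and μ have blocks that are scalar multiples of the identity, i.e. they lie in the image of
the ring homomorphism `M ↦ M ⊗ 1` from 2 × 2 matrices. Inversion commutes with this map, so Σ(w)
has four blocks in its image, and `gg1` of such a matrix is again of the form `N ⊗ 1` for an
explicit 2 × 2 matrix `N`. Everything reduces to 2 × 2 arithmetic with
`[[δ, β], [β, δ]]⁻¹ = (δ² - β²)⁻¹ [[δ, -β], [-β, δ]]`, and `det (N ⊗ 1) = det N ^ g₀`.
-/

open Matrix

/-- The Siegel map Σ(λ+iμ) = [[μ⁻¹, −μ⁻¹λ],[−λμ⁻¹, μ+λμ⁻¹λ]]. -/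
noncomputable def SigmaM {n : Type*} [Fintype n] [DecidableEq n] (l m : Matrix n n ℝ) :
    Matrix (n ⊕ n) (n ⊕ n) ℝ :=
  Matrix.fromBlocks m⁻¹ (-(m⁻¹ * l)) (-(l * m⁻¹)) (m + l * m⁻¹ * l)

open scoped Kronecker

def finTwoProdEquivSum (n : Type*) : Fin 2 × n ≃ n ⊕ n :=
  (finTwoEquiv.prodCongr (Equiv.refl n)).trans (Equiv.boolProdEquivSum n)

section ScalarBlocks

variable {R : Type*} [CommRing R] {n : Type*} [Fintype n] [DecidableEq n]

/-- `M ↦ M ⊗ₖ 1`, with rows and columns indexed by `n ⊕ n` instead of `Fin 2 × n`. -/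
def scalarBlocks : Matrix (Fin 2) (Fin 2) R →+* Matrix (n ⊕ n) (n ⊕ n) R :=
  (reindexAlgEquiv R R (finTwoProdEquivSum n)).toRingHom.comp
    { toFun := fun M => M ⊗ₖ 1
      map_one' := one_kronecker_one
      map_mul' := fun A B => by rw [← mul_kronecker_mul, one_mul]
      map_zero' := zero_kronecker _
      map_add' := fun A B => add_kronecker _ _ _ }

theorem scalarBlocks_apply (M : Matrix (Fin 2) (Fin 2) R) :
    (scalarBlocks M : Matrix (n ⊕ n) (n ⊕ n) R) =
      fromBlocks (M 0 0 • 1) (M 0 1 • 1) (M 1 0 • 1) (M 1 1 • 1) := by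
  ext (i | i) (j | j) <;> simp [scalarBlocks, finTwoProdEquivSum, finTwoEquiv, one_apply]

theorem scalarBlocks_inv (M : Matrix (Fin 2) (Fin 2) R) :
    (scalarBlocks M⁻¹ : Matrix (n ⊕ n) (n ⊕ n) R) = (scalarBlocks M)⁻¹ := by
  change reindex _ _ (M⁻¹ ⊗ₖ 1) = (reindex _ _ (M ⊗ₖ 1))⁻¹
  rw [inv_reindex, inv_kronecker, inv_one]

theorem det_scalarBlocks (M : Matrix (Fin 2) (Fin 2) R) :
    (scalarBlocks M : Matrix (n ⊕ n) (n ⊕ n) R).det = M.det ^ Fintype.card n := by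
  simp [scalarBlocks, det_kronecker]

end ScalarBlocks

theorem sigmaM_scalarBlocks {n : Type*} [Fintype n] [DecidableEq n]
    (L M : Matrix (Fin 2) (Fin 2) ℝ) :
    SigmaM (scalarBlocks L : Matrix (n ⊕ n) (n ⊕ n) ℝ) (scalarBlocks M) =
      fromBlocks (scalarBlocks M⁻¹) (scalarBlocks (-(M⁻¹ * L))) (scalarBlocks (-(L * M⁻¹)))
        (scalarBlocks (M + L * M⁻¹ * L)) := by
  simp only [SigmaM, scalarBlocks_inv, map_mul, map_neg, map_add]

theorem gg1_fromBlocks_scalarBlocks {R : Type*} [CommRing R] {g₀ : ℕ}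
    (A B C D : Matrix (Fin 2) (Fin 2) R) :
    gg1 (fromBlocks (scalarBlocks A) (scalarBlocks B) (scalarBlocks C) (scalarBlocks D) :
        Matrix ((Fin g₀ ⊕ Fin g₀) ⊕ (Fin g₀ ⊕ Fin g₀)) ((Fin g₀ ⊕ Fin g₀) ⊕ (Fin g₀ ⊕ Fin g₀)) R) =
      scalarBlocks !![A 0 0 + A 0 1, B 0 0 - B 0 1; C 0 0 + C 0 1, D 0 0 - D 0 1] := by
  ext (i | i) (j | j) <;> simp [gg1, scalarBlocks_apply, add_smul, sub_smul]

theorem inv_circulant_fin_two {K : Type*} [Field K] (b d : K) :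
    !![d, b; b, d]⁻¹ = (d ^ 2 - b ^ 2)⁻¹ • !![d, -b; -b, d] := by
  rw [inv_def, adjugate_fin_two_of, det_fin_two_of, Ring.inverse_eq_inv', sq, sq]

theorem gg1_sigmaM_scalarBlocks {g₀ : ℕ} {b c d : ℝ} (hplus : d + b ≠ 0) (hminus : d - b ≠ 0) :
    gg1 (SigmaM (scalarBlocks !![c, 0; 0, -c] : Matrix (Fin g₀ ⊕ Fin g₀) (Fin g₀ ⊕ Fin g₀) ℝ)
        (scalarBlocks !![d, b; b, d])) =
      scalarBlocks ((d + b)⁻¹ • !![1, -c; -c, c ^ 2 + d ^ 2 - b ^ 2]) := by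
  have hsq : d ^ 2 - b ^ 2 ≠ 0 := by
    rw [sq_sub_sq]
    exact mul_ne_zero hplus hminus
  rw [sigmaM_scalarBlocks, gg1_fromBlocks_scalarBlocks, inv_circulant_fin_two]
  congr 1
  ext i j
  fin_cases i <;> fin_cases j <;> simp <;> field_simp <;> ring

theorem stmt18 (b c d : ℝ) (h : |b| < d) :
    gg1 (SigmaM
        (Matrix.fromBlocks (c • (1 : Matrix (Fin 1) (Fin 1) ℝ)) 0 0 (-(c • 1)))
        (Matrix.fromBlocks (d • (1 : Matrix (Fin 1) (Fin 1) ℝ)) (b • 1) (b • 1) (d • 1))) =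
      (d + b)⁻¹ • Matrix.fromBlocks (1 : Matrix (Fin 1) (Fin 1) ℝ)
        (-(c • 1)) (-(c • 1)) ((c ^ 2 + d ^ 2 - b ^ 2) • 1) ∧
    (gg1 (SigmaM
        (Matrix.fromBlocks (c • (1 : Matrix (Fin 1) (Fin 1) ℝ)) 0 0 (-(c • 1)))
        (Matrix.fromBlocks (d • (1 : Matrix (Fin 1) (Fin 1) ℝ)) (b • 1) (b • 1) (d • 1)))).det =
      (d - b) / (d + b) := by
  obtain ⟨hbd, hdb⟩ := abs_lt.mp h
  have hplus : d + b ≠ 0 := by linarith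
  have hminus : d - b ≠ 0 := by linarith
  have hL : fromBlocks (c • (1 : Matrix (Fin 1) (Fin 1) ℝ)) 0 0 (-(c • 1)) =
      scalarBlocks !![c, 0; 0, -c] := by
    simp [scalarBlocks_apply]
  have hM : fromBlocks (d • (1 : Matrix (Fin 1) (Fin 1) ℝ)) (b • 1) (b • 1) (d • 1) =
      scalarBlocks !![d, b; b, d] := by
    simp [scalarBlocks_apply]
  rw [hL, hM, gg1_sigmaM_scalarBlocks hplus hminus]
  refine ⟨?_, ?_⟩
  · simp [scalarBlocks_apply, fromBlocks_smul, smul_smul]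
  · rw [det_scalarBlocks, det_smul, det_fin_two_of, Fintype.card_fin, Fintype.card_fin]
    field_simp
    ring
end

section
/- Define 𝒟 ⊂ ℂ-symmetric 2×2 matrices as the set of w = [[γ+iδ, iβ],[iβ, −γ+iδ]] with δ > |β|, 1 ≤ γ²+δ²−β², and 0 ≤ γ ≤ 1/2. Then w ↦ (1/(δ+β))·[[1,−γ],[−γ, γ²+δ²−β²]] maps 𝒟 bijectively onto the set of 2×2 symmetric positive definite matrices [[φ,χ],[χ,ψ]] with φ ≤ ψ and −φ ≤ 2χ ≤ 0 (the Lagrange–Hermite reduced domain for binary quadratic forms), intersected with the image of the map over all δ > |β|. -/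
/-! All three coordinates of `phiChiPsi (β, γ, δ)` share the denominator `δ + β`, which is
positive when `δ > |β|`; clearing it turns `φ ≤ ψ` and `-φ ≤ 2χ ≤ 0` into
`1 ≤ γ² + δ² - β²` and `0 ≤ γ ≤ 1/2`. The map is injective wherever `δ + β ≠ 0`, since
`φ` determines `δ + β`, then `χ` determines `γ`, and `ψ` determines `δ² - β²`, hence `δ - β`. -/

/-- The substitution (β,γ,δ) ↦ (φ,χ,ψ) = (1/(δ+β), −γ/(δ+β), (γ²+δ²−β²)/(δ+β)). -/
noncomputable def phiChiPsi (p : ℝ × ℝ × ℝ) : ℝ × ℝ × ℝ :=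
  (1 / (p.2.2 + p.1), -p.2.1 / (p.2.2 + p.1),
    (p.2.1 ^ 2 + p.2.2 ^ 2 - p.1 ^ 2) / (p.2.2 + p.1))

lemma phiChiPsi_reduced_iff {b c d : ℝ} (h : 0 < d + b) :
    ((phiChiPsi (b, c, d)).1 ≤ (phiChiPsi (b, c, d)).2.2 ∧
        -(phiChiPsi (b, c, d)).1 ≤ 2 * (phiChiPsi (b, c, d)).2.1 ∧
        2 * (phiChiPsi (b, c, d)).2.1 ≤ 0) ↔
      (1 ≤ c ^ 2 + d ^ 2 - b ^ 2 ∧ 0 ≤ c ∧ c ≤ 1 / 2) := by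
  simp only [phiChiPsi, ← neg_div, mul_div_assoc', div_le_div_iff_of_pos_right h,
    div_le_iff₀ h, zero_mul]
  constructor <;> rintro ⟨h1, h2, h3⟩ <;> exact ⟨h1, by linarith, by linarith⟩

lemma phiChiPsi_injOn : Set.InjOn phiChiPsi {p | p.2.2 + p.1 ≠ 0} := by
  rintro ⟨b, c, d⟩ (hs : d + b ≠ 0) ⟨b', c', d'⟩ - heq
  simp only [phiChiPsi, Prod.mk.injEq] at heq
  obtain ⟨e1, e2, e3⟩ := heq
  have hsum : d + b = d' + b' := by simpa using e1
  rw [← hsum, div_left_inj' hs] at e2 e3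
  obtain rfl : c = c' := neg_inj.mp e2
  have hdiff : (d - b) * (d + b) = (d' - b') * (d + b) := by
    linear_combination e3 - (d' - b') * hsum
  have hdiff' := mul_right_cancel₀ hs hdiff
  obtain rfl : b = b' := by linarith
  obtain rfl : d = d' := by linarith
  rfl

theorem stmt19 :
    (∀ b c d : ℝ, |b| < d →
      ((1 ≤ c ^ 2 + d ^ 2 - b ^ 2 ∧ 0 ≤ c ∧ c ≤ 1 / 2) ↔
        ((phiChiPsi (b, c, d)).1 ≤ (phiChiPsi (b, c, d)).2.2 ∧
          -(phiChiPsi (b, c, d)).1 ≤ 2 * (phiChiPsi (b, c, d)).2.1 ∧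
          2 * (phiChiPsi (b, c, d)).2.1 ≤ 0))) ∧
    Set.BijOn phiChiPsi
      {p : ℝ × ℝ × ℝ | |p.1| < p.2.2 ∧ 1 ≤ p.2.1 ^ 2 + p.2.2 ^ 2 - p.1 ^ 2 ∧
        0 ≤ p.2.1 ∧ p.2.1 ≤ 1 / 2}
      ({q : ℝ × ℝ × ℝ | q.1 ≤ q.2.2 ∧ -q.1 ≤ 2 * q.2.1 ∧ 2 * q.2.1 ≤ 0} ∩
        phiChiPsi '' {p : ℝ × ℝ × ℝ | |p.1| < p.2.2}) := by
  have hpos {b d : ℝ} (h : |b| < d) : 0 < d + b := by linarith [neg_abs_le b]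
  refine ⟨fun b c d h => (phiChiPsi_reduced_iff (hpos h)).symm, ?mapsTo, ?injOn, ?surjOn⟩
  case mapsTo =>
    rintro ⟨b, c, d⟩ ⟨h, hred⟩
    exact ⟨(phiChiPsi_reduced_iff (hpos h)).mpr hred, (b, c, d), h, rfl⟩
  case injOn =>
    exact phiChiPsi_injOn.mono fun p hp => (hpos hp.1).ne'
  case surjOn =>
    rintro q ⟨hq, ⟨b, c, d⟩, h, rfl⟩
    exact ⟨(b, c, d), ⟨h, (phiChiPsi_reduced_iff (hpos h)).mp hq⟩, rfl⟩
end
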